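/- Consider one LALM iteration from (x^k, y^k, z^k) with z^k ≥ 0 componentwise, under Assumption (Lip), with θ ∈ (0,1), 0 < ρ_y ≤ β and 0 < ρ_z ≤ β(1−θ). Let (x*, y*, z*) be a KKT point with associated set J ⊆ {1,…,m} such that f_j(x*) = 0 and z_j* > 0 for j ∈ J, and f_j(x*) < 0 and z_j* = 0 for j ∉ J. Suppose in addition: β f_j(x^{k+1}) + z_j^k > 0 and β f_j(x^{k+1}) + z_j* > 0 for j ∈ J; β f_j(x^{k+1}) + z_j^k < 0 and β f_j(x^{k+1}) < 0 for j ∉ J; and the strong-convexity inequality f_0(x^{k+1}) − f_0(x*) + ⟨y*, r^{k+1}⟩ + (β/2)‖r^{k+1}‖² + Ψ_β(x^{k+1}, z*) − Ψ_β(x*, z*) ≥ (μ/4)‖x^{k+1} − x*‖² holds for a constant μ > 0. Then (θμ/4)‖x^{k+1} − x*‖² + (η^k/2)‖x^{k+1} − x*‖² − (β/2)‖r^{k+1}‖² + (1/(2ρ_y))‖y^{k+1} − y*‖² + (1/(2ρ_z))‖z^{k+1} − z*‖² + (1/2)(x^{k+1} − x^k)ᵀ[(η^k − L_g − L_Ψ(x^k,z^k))I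 − βAᵀA](x^{k+1} − x^k) + (β(1 − θ/2) − ρ_y/2)‖r^{k+1}‖² ≤ (η^k/2)‖x^k − x*‖² − (β/2)‖r^k‖² + (1/(2ρ_y))‖y^k − y*‖² + (1/(2ρ_z))‖z^k − z*‖². -/

import Mathlib

/-!
The `x`-update is a proximal step on the linearisation of `F_β`, so the three-point inequality for
the proximal objective, together with the descent lemma and convexity for `g` and for every
`ψ_β(f_j(·), z_jᵏ)`, bounds the decrease of `f₀ + ⟪yᵏ, A · - b⟫ + Ψ_β(·, zᵏ)` from `x*` to `xᵏ⁺¹`.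
The `y`-update turns `⟪yᵏ - y*, rᵏ⁺¹⟫` into a difference of squared distances. The local sign
conditions fix the branch of `ψ_β` in every coordinate, so the `z`-update does the same for the
`Ψ_β`-terms up to `ρ_z/2 ∑_{j∈J} f_j(xᵏ⁺¹)²`. Finally the objective gap
`f₀(xᵏ⁺¹) - f₀(x*) + ⟪y*, rᵏ⁺¹⟫ + β/2 ‖rᵏ⁺¹‖² + Ψ_β(xᵏ⁺¹, z*) - Ψ_β(x*, z*)` is at least
`μ/4 ‖xᵏ⁺¹ - x*‖²` by assumption and at least `β/2 (‖rᵏ⁺¹‖² + ∑_{j∈J} f_j(xᵏ⁺¹)²)` by the KKT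
conditions; the `θ`-combination of the two absorbs the `ρ_z` term because `ρ_z ≤ β(1 - θ)`.
-/

open scoped RealInnerProductSpace

noncomputable section

/-- The function `ψ_β(u,v)` used in the classic augmented Lagrangian. -/
def psi (β u v : ℝ) : ℝ :=
  if 0 ≤ β * u + v then u * v + β / 2 * u ^ 2 else -(v ^ 2) / (2 * β)

/-- `Ψ_β(x,z) = ∑_j ψ_β(f_j(x), z_j)`. -/
def PsiAug {p m : ℕ} (β : ℝ) (f : Fin m → EuclideanSpace ℝ (Fin p) → ℝ)
    (x : EuclideanSpace ℝ (Fin p)) (z : EuclideanSpace ℝ (Fin m)) : ℝ :=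
  ∑ j, psi β (f j x) (z j)

/-- `∇_x F_β(x,y,z)`, the `x`-gradient of the smooth part of the augmented Lagrangian. -/
def gradFx {p q m : ℕ} (β : ℝ) (f : Fin m → EuclideanSpace ℝ (Fin p) → ℝ)
    (g' : EuclideanSpace ℝ (Fin p) → EuclideanSpace ℝ (Fin p))
    (f' : Fin m → EuclideanSpace ℝ (Fin p) → EuclideanSpace ℝ (Fin p))
    (A : EuclideanSpace ℝ (Fin p) →L[ℝ] EuclideanSpace ℝ (Fin q))
    (b : EuclideanSpace ℝ (Fin q))
    (x : EuclideanSpace ℝ (Fin p)) (y : EuclideanSpace ℝ (Fin q))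
    (z : EuclideanSpace ℝ (Fin m)) : EuclideanSpace ℝ (Fin p) :=
  g' x + (ContinuousLinearMap.adjoint A) (y + β • (A x - b))
    + ∑ j, max (β * f j x + z j) 0 • f' j x

open Set Filter Topology

lemma le_of_forall_mem_Ioc_le_add_mul {a b c : ℝ} (h : ∀ t ∈ Ioc (0 : ℝ) 1, a ≤ b + c * t) :
    a ≤ b := by
  have hlim : Tendsto (fun t : ℝ => b + c * t) (𝓝[>] 0) (𝓝 b) := by
    have hcont : Continuous fun t : ℝ => b + c * t := by fun_prop
    simpa using (hcont.tendsto 0).mono_left nhdsWithin_le_nhds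
  exact ge_of_tendsto hlim (eventually_of_mem (Ioc_mem_nhdsGT zero_lt_one) h)

section InnerProductSpace

variable {E : Type*} [NormedAddCommGroup E] [InnerProductSpace ℝ E]

lemma norm_one_sub_smul_add_smul_sq (a c : E) (t : ℝ) :
    ‖(1 - t) • a + t • c‖ ^ 2
      = (1 - t) * ‖a‖ ^ 2 + t * ‖c‖ ^ 2 - t * (1 - t) * ‖a - c‖ ^ 2 := by
  simp only [norm_add_sq_real, norm_sub_sq_real, norm_smul, real_inner_smul_left,
    real_inner_smul_right, Real.norm_eq_abs, mul_pow, sq_abs]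
  ring

lemma inner_sub_eq_of_eq_add_smul {y₀ y₁ y r : E} {ρ : ℝ} (hρ : ρ ≠ 0)
    (hy : y₁ = y₀ + ρ • r) :
    ⟪y₀ - y, r⟫ = 1 / (2 * ρ) * (‖y₁ - y‖ ^ 2 - ‖y₀ - y‖ ^ 2) - ρ / 2 * ‖r‖ ^ 2 := by
  have hexp : y₁ - y = (y₀ - y) + ρ • r := by rw [hy]; abel
  rw [hexp, norm_add_sq_real, real_inner_smul_right, norm_smul, Real.norm_eq_abs, mul_pow,
    sq_abs]
  field_simp
  ring

/-- The objective minimised by `x₁` is `h` plus an `η`-strongly convex quadratic. -/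
lemma ConvexOn.prox_three_point {h : E → ℝ} (hh : ConvexOn ℝ univ h) {G x₀ x₁ : E} {η : ℝ}
    (hmin : ∀ x, h x₁ + ⟪G, x₁⟫ + η / 2 * ‖x₁ - x₀‖ ^ 2 ≤ h x + ⟪G, x⟫ + η / 2 * ‖x - x₀‖ ^ 2)
    (y : E) :
    h x₁ + ⟪G, x₁⟫ + η / 2 * ‖x₁ - x₀‖ ^ 2 + η / 2 * ‖y - x₁‖ ^ 2
      ≤ h y + ⟪G, y⟫ + η / 2 * ‖y - x₀‖ ^ 2 := by
  set P : E → ℝ := fun x => h x + ⟪G, x⟫ + η / 2 * ‖x - x₀‖ ^ 2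
  change P x₁ + η / 2 * ‖y - x₁‖ ^ 2 ≤ P y
  refine le_of_forall_mem_Ioc_le_add_mul (c := η / 2 * ‖y - x₁‖ ^ 2) fun t ht => ?_
  have hconv : h ((1 - t) • x₁ + t • y) ≤ (1 - t) * h x₁ + t * h y :=
    hh.2 (mem_univ _) (mem_univ _) (by linarith [ht.2]) ht.1.le (by ring)
  have hlin : ⟪G, (1 - t) • x₁ + t • y⟫ = (1 - t) * ⟪G, x₁⟫ + t * ⟪G, y⟫ := by
    rw [inner_add_right, real_inner_smul_right, real_inner_smul_right]
  have hsq : ‖(1 - t) • x₁ + t • y - x₀‖ ^ 2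
      = (1 - t) * ‖x₁ - x₀‖ ^ 2 + t * ‖y - x₀‖ ^ 2 - t * (1 - t) * ‖y - x₁‖ ^ 2 := by
    rw [show (1 - t) • x₁ + t • y - x₀ = (1 - t) • (x₁ - x₀) + t • (y - x₀) by module,
      norm_one_sub_smul_add_smul_sq, norm_sub_rev (x₁ - x₀), sub_sub_sub_cancel_right]
  have hseg : P x₁ ≤ (1 - t) * P x₁ + t * P y - η / 2 * (t * (1 - t)) * ‖y - x₁‖ ^ 2 := by
    calc P x₁ ≤ P ((1 - t) • x₁ + t • y) := hmin _
      _ ≤ _ := by simp only [P, hlin, hsq]; linarith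
  have : t * (P x₁ + η / 2 * ‖y - x₁‖ ^ 2) ≤ t * (P y + η / 2 * ‖y - x₁‖ ^ 2 * t) := by
    linarith
  exact le_of_mul_le_mul_left this ht.1

variable [CompleteSpace E] {φ : E → ℝ} {φ' : E → E}

lemma hasDerivAt_comp_add_smul_of_hasGradientAt (hφ : ∀ x, HasGradientAt φ (φ' x) x)
    (x d : E) (t : ℝ) :
    HasDerivAt (fun s : ℝ => φ (x + s • d)) ⟪φ' (x + t • d), d⟫ t := by
  have hline : HasDerivAt (fun s : ℝ => x + s • d) d t := by
    simpa using ((hasDerivAt_id t).smul_const d).const_add x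
  simpa [InnerProductSpace.toDual_apply_apply, Function.comp_def] using
    (hφ (x + t • d)).hasFDerivAt.comp_hasDerivAt t hline

lemma ConvexOn.add_inner_le_of_hasGradientAt (hφc : ConvexOn ℝ univ φ)
    (hφ : ∀ x, HasGradientAt φ (φ' x) x) (x y : E) : φ x + ⟪φ' x, y - x⟫ ≤ φ y := by
  have hline : ConvexOn ℝ univ fun t : ℝ => φ (x + t • (y - x)) := by
    have := hφc.comp_affineMap (AffineMap.lineMap x y)
    simpa [Function.comp_def, AffineMap.lineMap_apply_module', add_comm] using this
  have hslope := hline.le_slope_of_hasDerivAt (mem_univ 0) (mem_univ 1) one_pos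
    (by simpa using hasDerivAt_comp_add_smul_of_hasGradientAt hφ x (y - x) 0)
  simp only [slope_def_field, one_smul, add_sub_cancel, zero_smul, add_zero, sub_zero,
    div_one] at hslope
  linarith

lemma le_add_inner_add_sq_of_lipschitz_gradient {C : ℝ} (hφ : ∀ x, HasGradientAt φ (φ' x) x)
    (hC : ∀ a b, ‖φ' a - φ' b‖ ≤ C * ‖a - b‖) (x y : E) :
    φ y ≤ φ x + ⟪φ' x, y - x⟫ + C / 2 * ‖y - x‖ ^ 2 := by
  set d := y - x
  have hderiv := hasDerivAt_comp_add_smul_of_hasGradientAt hφ x d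
  have hbound : ∀ t ∈ Ico (0 : ℝ) 1,
      ⟪φ' (x + t • d), d⟫ ≤ ⟪φ' x, d⟫ + C * t * ‖d‖ ^ 2 := by
    intro t ht
    have hlip : ‖φ' (x + t • d) - φ' x‖ ≤ C * (t * ‖d‖) := by
      simpa [norm_smul, abs_of_nonneg ht.1] using hC (x + t • d) x
    have hcs := real_inner_le_norm (φ' (x + t • d) - φ' x) d
    rw [inner_sub_left] at hcs
    nlinarith [mul_le_mul_of_nonneg_right hlip (norm_nonneg d)]
  have hB : ∀ t, HasDerivAt (fun s : ℝ => φ x + s * ⟪φ' x, d⟫ + C / 2 * s ^ 2 * ‖d‖ ^ 2)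
      (⟪φ' x, d⟫ + C * t * ‖d‖ ^ 2) t := by
    intro t
    have := (((hasDerivAt_id t).mul_const ⟪φ' x, d⟫).const_add (φ x)).add
      (((hasDerivAt_pow 2 t).const_mul (C / 2)).mul_const (‖d‖ ^ 2))
    exact this.congr_deriv (by push_cast; ring)
  have key := image_le_of_deriv_right_le_deriv_boundary
    (fun t _ => (hderiv t).continuousAt.continuousWithinAt)
    (fun t _ => (hderiv t).hasDerivWithinAt) (by simp)
    (fun t _ => (hB t).continuousAt.continuousWithinAt)
    (fun t _ => (hB t).hasDerivWithinAt) hbound (right_mem_Icc.2 zero_le_one)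
  simpa [d] using key

lemma ConvexOn.sub_le_inner_add_sq_of_lipschitz_gradient {C : ℝ} (hφc : ConvexOn ℝ univ φ)
    (hφ : ∀ x, HasGradientAt φ (φ' x) x) (hC : ∀ a b, ‖φ' a - φ' b‖ ≤ C * ‖a - b‖)
    (x₀ x₁ u : E) :
    φ x₁ - φ u ≤ ⟪φ' x₀, x₁ - u⟫ + C / 2 * ‖x₁ - x₀‖ ^ 2 := by
  have hdesc := le_add_inner_add_sq_of_lipschitz_gradient hφ hC x₀ x₁
  have hconv := hφc.add_inner_le_of_hasGradientAt hφ x₀ u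
  have hsplit : ⟪φ' x₀, x₁ - u⟫ = ⟪φ' x₀, x₁ - x₀⟫ - ⟪φ' x₀, u - x₀⟫ := by
    rw [← inner_sub_right, sub_sub_sub_cancel_right]
  linarith

lemma abs_sub_le_of_norm_gradient_le {B : ℝ} (hφ : ∀ x, HasGradientAt φ (φ' x) x)
    (hB : ∀ x, ‖φ' x‖ ≤ B) (x y : E) : |φ y - φ x| ≤ B * ‖y - x‖ := by
  simpa using convex_univ.norm_image_sub_le_of_norm_hasFDerivWithin_le
    (fun z _ => (hφ z).hasFDerivAt.hasFDerivWithinAt) (fun z _ => by simpa using hB z)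
    (mem_univ x) (mem_univ y)

end InnerProductSpace

section Psi

variable {β u v : ℝ}

lemma psi_of_nonneg (h : 0 ≤ β * u + v) : psi β u v = u * v + β / 2 * u ^ 2 :=
  if_pos h

lemma psi_of_neg (h : β * u + v < 0) : psi β u v = -(v ^ 2) / (2 * β) :=
  if_neg (not_le.2 h)

lemma psi_zero_left (hv : 0 ≤ v) : psi β 0 v = 0 := by
  simp [psi, hv]

lemma psi_zero_right_of_neg (h : β * u < 0) : psi β u 0 = 0 := by
  simp [psi, not_le.2 h]

lemma psi_nonpos (hβ : 0 < β) (hu : u < 0) (hv : 0 ≤ v) : psi β u v ≤ 0 := by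
  unfold psi
  split_ifs
  · nlinarith [mul_nonneg (by linarith : (0:ℝ) ≤ -u) (by linarith : (0:ℝ) ≤ v + β * u / 2)]
  · have : 0 ≤ v ^ 2 / (2 * β) := by positivity
    rw [neg_div]; linarith

/- `ψ_β(·, v)` is convex and differentiable, with `β`-Lipschitz derivative
`u ↦ max (β u + v) 0`; the next two lemmas are the corresponding descent and
first-order convexity inequalities. -/
lemma psi_le_add_mul_add_sq (hβ : 0 < β) (v u₀ u₁ : ℝ) :
    psi β u₁ v ≤ psi β u₀ v + max (β * u₀ + v) 0 * (u₁ - u₀) + β / 2 * (u₁ - u₀) ^ 2 := by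
  have h2β : (0:ℝ) < 2 * β := by linarith
  have hkey : (2 * β) * (-(v ^ 2) / (2 * β)) = -(v ^ 2) := by field_simp
  rcases le_or_gt 0 (β * u₀ + v) with h₀ | h₀ <;> rcases le_or_gt 0 (β * u₁ + v) with h₁ | h₁
  · rw [psi_of_nonneg h₀, psi_of_nonneg h₁, max_eq_left h₀]; nlinarith
  · rw [psi_of_nonneg h₀, psi_of_neg h₁, max_eq_left h₀]
    nlinarith [sq_nonneg (β * u₁ + v)]
  · rw [psi_of_neg h₀, psi_of_nonneg h₁, max_eq_right h₀.le]
    nlinarith [mul_nonneg (by linarith : (0:ℝ) ≤ β * (u₁ - u₀) - (β * u₁ + v))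
      (by linarith : (0:ℝ) ≤ β * (u₁ - u₀) + (β * u₁ + v))]
  · rw [psi_of_neg h₀, psi_of_neg h₁, max_eq_right h₀.le]
    nlinarith [mul_nonneg hβ.le (sq_nonneg (u₁ - u₀))]

lemma psi_add_mul_le (hβ : 0 < β) (v u₀ u₁ : ℝ) :
    psi β u₀ v + max (β * u₀ + v) 0 * (u₁ - u₀) ≤ psi β u₁ v := by
  have h2β : (0:ℝ) < 2 * β := by linarith
  have hkey : (2 * β) * (-(v ^ 2) / (2 * β)) = -(v ^ 2) := by field_simp
  rcases le_or_gt 0 (β * u₀ + v) with h₀ | h₀ <;> rcases le_or_gt 0 (β * u₁ + v) with h₁ | h₁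
  · rw [psi_of_nonneg h₀, psi_of_nonneg h₁, max_eq_left h₀]
    nlinarith [mul_nonneg hβ.le (sq_nonneg (u₁ - u₀))]
  · rw [psi_of_nonneg h₀, psi_of_neg h₁, max_eq_left h₀]
    nlinarith [mul_nonneg h₀ (by linarith : (0:ℝ) ≤ -(β * (u₁ - u₀)) - (β * u₀ + v)),
      sq_nonneg (β * u₀ + v)]
  · rw [psi_of_neg h₀, psi_of_nonneg h₁, max_eq_right h₀.le]
    nlinarith [sq_nonneg (β * u₁ + v)]
  · rw [psi_of_neg h₀, psi_of_neg h₁, max_eq_right h₀.le]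
    simp

lemma psi_sub_le (hβ : 0 < β) (v u₀ u₁ u : ℝ) :
    psi β u₁ v - psi β u v ≤ max (β * u₀ + v) 0 * (u₁ - u) + β / 2 * (u₁ - u₀) ^ 2 := by
  have hdesc := psi_le_add_mul_add_sq hβ v u₀ u₁
  have hconv := psi_add_mul_le hβ v u₀ u
  linarith

lemma psi_dual_step_of_active {ρ w : ℝ} (hρ : ρ ≠ 0) (hv : 0 ≤ v) (hw : 0 ≤ w)
    (huv : 0 ≤ β * u + v) (huw : 0 ≤ β * u + w) :
    1 / (2 * ρ) * ((v + ρ * u - w) ^ 2 - (v - w) ^ 2) - ρ / 2 * u ^ 2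
      = psi β u v - psi β u w - psi β 0 v + psi β 0 w := by
  rw [psi_of_nonneg huv, psi_of_nonneg huw, psi_zero_left hv, psi_zero_left hw]
  field_simp
  ring

lemma psi_dual_step_of_inactive {ρ u' : ℝ} (hβ : 0 < β) (hρ : 0 < ρ) (hρβ : ρ ≤ β)
    (hu' : u' < 0) (hv : 0 ≤ v) (huv : β * u + v < 0) :
    1 / (2 * ρ) * ((v + ρ * (-v / β)) ^ 2 - v ^ 2)
      ≤ psi β u v - psi β u 0 - psi β u' v + psi β u' 0 := by
  have hu : β * u < 0 := by linarith
  rw [psi_of_neg huv, psi_zero_right_of_neg hu,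
    psi_zero_right_of_neg (mul_neg_of_pos_of_neg hβ hu')]
  have hψ : psi β u' v ≤ 0 := psi_nonpos hβ hu' hv
  have hstep : 1 / (2 * ρ) * ((v + ρ * (-v / β)) ^ 2 - v ^ 2)
      = v ^ 2 * (ρ - 2 * β) / (2 * β ^ 2) := by
    field_simp
    ring
  have hcmp : v ^ 2 * (ρ - 2 * β) / (2 * β ^ 2) ≤ -(v ^ 2) / (2 * β) := by
    rw [div_le_div_iff₀ (by positivity) (by positivity)]
    nlinarith [mul_nonneg (mul_nonneg hβ.le (sq_nonneg v)) (sub_nonneg.2 hρβ)]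
  linarith

end Psi

section LALM

variable {p q m : ℕ} {β : ℝ} {f : Fin m → EuclideanSpace ℝ (Fin p) → ℝ}
  {f' : Fin m → EuclideanSpace ℝ (Fin p) → EuclideanSpace ℝ (Fin p)}

lemma psiAug_sub_le {L B : Fin m → ℝ} (hβ : 0 < β) (hfc : ∀ j, ConvexOn ℝ univ (f j))
    (hf : ∀ j x, HasGradientAt (f j) (f' j x) x)
    (hL : ∀ j a b, ‖f' j a - f' j b‖ ≤ L j * ‖a - b‖) (hB : ∀ j x, ‖f' j x‖ ≤ B j)
    (z : EuclideanSpace ℝ (Fin m)) (x₀ x₁ u : EuclideanSpace ℝ (Fin p)) :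
    PsiAug β f x₁ z - PsiAug β f u z
      ≤ ⟪∑ j, max (β * f j x₀ + z j) 0 • f' j x₀, x₁ - u⟫
        + (∑ j, (β * B j ^ 2 + L j * max (β * f j x₀ + z j) 0)) / 2 * ‖x₁ - x₀‖ ^ 2 := by
  have hterm : ∀ j, psi β (f j x₁) (z j) - psi β (f j u) (z j)
      ≤ max (β * f j x₀ + z j) 0 * ⟪f' j x₀, x₁ - u⟫
        + (β * B j ^ 2 + L j * max (β * f j x₀ + z j) 0) / 2 * ‖x₁ - x₀‖ ^ 2 := by
    intro j
    have hw : 0 ≤ max (β * f j x₀ + z j) 0 := le_max_right _ _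
    have hψ := psi_sub_le hβ (z j) (f j x₀) (f j x₁) (f j u)
    have hsmooth := mul_le_mul_of_nonneg_left
      ((hfc j).sub_le_inner_add_sq_of_lipschitz_gradient (hf j) (hL j) x₀ x₁ u) hw
    have hlip : (f j x₁ - f j x₀) ^ 2 ≤ B j ^ 2 * ‖x₁ - x₀‖ ^ 2 := by
      rw [← mul_pow, ← sq_abs]
      exact pow_le_pow_left₀ (abs_nonneg _) (abs_sub_le_of_norm_gradient_le (hf j) (hB j) _ _) 2
    nlinarith
  rw [sum_inner]
  simp only [real_inner_smul_left]
  calc PsiAug β f x₁ z - PsiAug β f u z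
      = ∑ j, (psi β (f j x₁) (z j) - psi β (f j u) (z j)) := by
        simp only [PsiAug, Finset.sum_sub_distrib]
    _ ≤ _ := Finset.sum_le_sum fun j _ => hterm j
    _ = _ := by rw [Finset.sum_add_distrib, ← Finset.sum_mul, ← Finset.sum_div]

lemma lalm_x_step {g h : EuclideanSpace ℝ (Fin p) → ℝ}
    {g' : EuclideanSpace ℝ (Fin p) → EuclideanSpace ℝ (Fin p)}
    {A : EuclideanSpace ℝ (Fin p) →L[ℝ] EuclideanSpace ℝ (Fin q)} {b : EuclideanSpace ℝ (Fin q)}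
    {Lg η : ℝ} {L B : Fin m → ℝ} (hβ : 0 < β) (hgc : ConvexOn ℝ univ g)
    (hhc : ConvexOn ℝ univ h) (hfc : ∀ j, ConvexOn ℝ univ (f j))
    (hg : ∀ x, HasGradientAt g (g' x) x) (hf : ∀ j x, HasGradientAt (f j) (f' j x) x)
    (hLg : ∀ a b, ‖g' a - g' b‖ ≤ Lg * ‖a - b‖)
    (hL : ∀ j a b, ‖f' j a - f' j b‖ ≤ L j * ‖a - b‖) (hB : ∀ j x, ‖f' j x‖ ≤ B j)
    {x₀ x₁ : EuclideanSpace ℝ (Fin p)} {y : EuclideanSpace ℝ (Fin q)}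
    {z : EuclideanSpace ℝ (Fin m)}
    (hmin : ∀ x, h x₁ + ⟪gradFx β f g' f' A b x₀ y z, x₁⟫ + η / 2 * ‖x₁ - x₀‖ ^ 2
      ≤ h x + ⟪gradFx β f g' f' A b x₀ y z, x⟫ + η / 2 * ‖x - x₀‖ ^ 2)
    {u : EuclideanSpace ℝ (Fin p)} (hu : A u = b) :
    g x₁ + h x₁ - (g u + h u) + ⟪y, A x₁ - b⟫
        + β / 2 * ‖A x₀ - b‖ ^ 2 + β / 2 * ‖A x₁ - b‖ ^ 2 - β / 2 * ‖A (x₁ - x₀)‖ ^ 2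
        + PsiAug β f x₁ z - PsiAug β f u z
      ≤ η / 2 * ‖x₀ - u‖ ^ 2 - η / 2 * ‖x₁ - u‖ ^ 2 - η / 2 * ‖x₁ - x₀‖ ^ 2
        + (Lg + ∑ j, (β * B j ^ 2 + L j * max (β * f j x₀ + z j) 0)) / 2 * ‖x₁ - x₀‖ ^ 2 := by
  set G := gradFx β f g' f' A b x₀ y z
  have hprox := hhc.prox_three_point hmin u
  have hGu : ⟪G, x₁ - u⟫ = ⟪G, x₁⟫ - ⟪G, u⟫ := inner_sub_right _ _ _
  have hG : ⟪G, x₁ - u⟫ = ⟪g' x₀, x₁ - u⟫ + ⟪y, A x₁ - b⟫ + β * ⟪A x₀ - b, A x₁ - b⟫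
      + ⟪∑ j, max (β * f j x₀ + z j) 0 • f' j x₀, x₁ - u⟫ := by
    have hAu : A (x₁ - u) = A x₁ - b := by rw [map_sub, hu]
    simp only [G, gradFx, inner_add_left, ContinuousLinearMap.adjoint_inner_left, hAu,
      real_inner_smul_left]
    ring
  have hgsmooth := hgc.sub_le_inner_add_sq_of_lipschitz_gradient hg hLg x₀ x₁ u
  have hΨ := psiAug_sub_le hβ hfc hf hL hB z x₀ x₁ u
  have hres : β / 2 * ‖A (x₁ - x₀)‖ ^ 2
      = β / 2 * ‖A x₁ - b‖ ^ 2 - β * ⟪A x₀ - b, A x₁ - b⟫ + β / 2 * ‖A x₀ - b‖ ^ 2 := by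
    rw [map_sub, show A x₁ - A x₀ = (A x₁ - b) - (A x₀ - b) by abel, norm_sub_sq_real,
      real_inner_comm]
    ring
  rw [norm_sub_rev u x₀, norm_sub_rev u x₁] at hprox
  linarith

end LALM

section ActiveSet

variable {p m : ℕ} {β : ℝ} {f : Fin m → EuclideanSpace ℝ (Fin p) → ℝ} {J : Finset (Fin m)}
  {x₁ xs : EuclideanSpace ℝ (Fin p)} {zs : EuclideanSpace ℝ (Fin m)}

lemma lalm_z_step {ρ : ℝ} (hβ : 0 < β) (hρ : 0 < ρ) (hρβ : ρ ≤ β)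
    {z z₁ : EuclideanSpace ℝ (Fin m)} (hz : ∀ j, 0 ≤ z j)
    (hz₁ : ∀ j, z₁ j = z j + ρ * max (-(z j) / β) (f j x₁))
    (hJin : ∀ j ∈ J, f j xs = 0 ∧ 0 < zs j) (hJout : ∀ j ∉ J, f j xs < 0 ∧ zs j = 0)
    (hin : ∀ j ∈ J, 0 < β * f j x₁ + z j ∧ 0 < β * f j x₁ + zs j)
    (hout : ∀ j ∉ J, β * f j x₁ + z j < 0) :
    1 / (2 * ρ) * (‖z₁ - zs‖ ^ 2 - ‖z - zs‖ ^ 2) - ρ / 2 * ∑ j ∈ J, f j x₁ ^ 2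
      ≤ PsiAug β f x₁ z - PsiAug β f x₁ zs - PsiAug β f xs z + PsiAug β f xs zs := by
  have hterm : ∀ j, 1 / (2 * ρ) * ((z₁ j - zs j) ^ 2 - (z j - zs j) ^ 2)
        - ρ / 2 * (if j ∈ J then f j x₁ ^ 2 else 0)
      ≤ psi β (f j x₁) (z j) - psi β (f j x₁) (zs j) - psi β (f j xs) (z j)
        + psi β (f j xs) (zs j) := by
    intro j
    by_cases hj : j ∈ J
    · obtain ⟨hfs, hzs⟩ := hJin j hj
      obtain ⟨hz₁j, hzsj⟩ := hin j hj
      have hmax : max (-(z j) / β) (f j x₁) = f j x₁ :=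
        max_eq_right (by rw [div_le_iff₀ hβ]; linarith)
      rw [hz₁ j, hmax, if_pos hj, hfs,
        psi_dual_step_of_active hρ.ne' (hz j) hzs.le hz₁j.le hzsj.le]
    · obtain ⟨hfs, hzs⟩ := hJout j hj
      have hmax : max (-(z j) / β) (f j x₁) = -(z j) / β :=
        max_eq_left (by rw [le_div_iff₀ hβ]; linarith [hout j hj])
      rw [hz₁ j, hmax, if_neg hj, hzs, sub_zero, sub_zero, mul_zero, sub_zero]
      exact psi_dual_step_of_inactive hβ hρ hρβ hfs (hz j) (hout j hj)
  calc 1 / (2 * ρ) * (‖z₁ - zs‖ ^ 2 - ‖z - zs‖ ^ 2) - ρ / 2 * ∑ j ∈ J, f j x₁ ^ 2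
      = ∑ j, (1 / (2 * ρ) * ((z₁ j - zs j) ^ 2 - (z j - zs j) ^ 2)
          - ρ / 2 * (if j ∈ J then f j x₁ ^ 2 else 0)) := by
        simp only [EuclideanSpace.real_norm_sq_eq, PiLp.sub_apply, mul_sub,
          Finset.sum_sub_distrib, Finset.mul_sum, Finset.sum_ite_mem, Finset.univ_inter, mul_ite,
          mul_zero]
    _ ≤ _ := Finset.sum_le_sum fun j _ => hterm j
    _ = _ := by simp only [PsiAug, Finset.sum_add_distrib, Finset.sum_sub_distrib]

lemma psiAug_sub_psiAug_of_kkt (hβ : 0 < β) (hJin : ∀ j ∈ J, f j xs = 0 ∧ 0 < zs j)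
    (hJout : ∀ j ∉ J, f j xs < 0 ∧ zs j = 0) (hin : ∀ j ∈ J, 0 < β * f j x₁ + zs j)
    (hout : ∀ j ∉ J, β * f j x₁ < 0) :
    PsiAug β f x₁ zs - PsiAug β f xs zs = ∑ j, zs j * f j x₁ + β / 2 * ∑ j ∈ J, f j x₁ ^ 2 := by
  have hterm : ∀ j, psi β (f j x₁) (zs j) - psi β (f j xs) (zs j)
      = zs j * f j x₁ + β / 2 * (if j ∈ J then f j x₁ ^ 2 else 0) := by
    intro j
    by_cases hj : j ∈ J
    · obtain ⟨hfs, hzs⟩ := hJin j hj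
      rw [psi_of_nonneg (hin j hj).le, hfs, psi_zero_left hzs.le, if_pos hj]
      ring
    · obtain ⟨hfs, hzs⟩ := hJout j hj
      rw [hzs, psi_zero_right_of_neg (hout j hj),
        psi_zero_right_of_neg (mul_neg_of_pos_of_neg hβ hfs), if_neg hj]
      ring
  simp only [PsiAug, ← Finset.sum_sub_distrib, hterm, Finset.sum_add_distrib, Finset.mul_sum,
    mul_ite, mul_zero, Finset.sum_ite_mem, Finset.univ_inter]

end ActiveSet

lemma kkt_lagrangian_gap_nonneg {ι E F : Type*} [Fintype ι]
    [NormedAddCommGroup E] [InnerProductSpace ℝ E] [CompleteSpace E]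
    [NormedAddCommGroup F] [InnerProductSpace ℝ F] [CompleteSpace F]
    {g h : E → ℝ} {f : ι → E → ℝ} {g' : E → E} {f' : ι → E → E} {A : E →L[ℝ] F} {b : F}
    {xs : E} {ys : F} {zs : ι → ℝ} (hgc : ConvexOn ℝ univ g) (hfc : ∀ j, ConvexOn ℝ univ (f j))
    (hg : ∀ x, HasGradientAt g (g' x) x) (hf : ∀ j x, HasGradientAt (f j) (f' j x) x)
    (hstat : ∃ s : E, (∀ u, h xs + ⟪s, u - xs⟫ ≤ h u) ∧
      g' xs + s + (ContinuousLinearMap.adjoint A) ys + ∑ j, zs j • f' j xs = 0)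
    (hfeas : A xs = b) (hzs : ∀ j, 0 ≤ zs j) (hcompl : ∀ j, zs j * f j xs = 0) (x : E) :
    0 ≤ g x + h x - (g xs + h xs) + ⟪ys, A x - b⟫ + ∑ j, zs j * f j x := by
  obtain ⟨s, hs, hzero⟩ := hstat
  have hgx := hgc.add_inner_le_of_hasGradientAt hg xs x
  have hhx := hs x
  have hfx : ∑ j, zs j * ⟪f' j xs, x - xs⟫ ≤ ∑ j, zs j * f j x := by
    refine Finset.sum_le_sum fun j _ => ?_
    have := mul_le_mul_of_nonneg_left ((hfc j).add_inner_le_of_hasGradientAt (hf j) xs x) (hzs j)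
    linarith [hcompl j]
  have hys : ⟪ys, A x - b⟫ = ⟪(ContinuousLinearMap.adjoint A) ys, x - xs⟫ := by
    rw [ContinuousLinearMap.adjoint_inner_left, map_sub, hfeas]
  have hsum : ⟪g' xs + s + (ContinuousLinearMap.adjoint A) ys + ∑ j, zs j • f' j xs, x - xs⟫
      = ⟪g' xs, x - xs⟫ + ⟪s, x - xs⟫ + ⟪(ContinuousLinearMap.adjoint A) ys, x - xs⟫
        + ∑ j, zs j * ⟪f' j xs, x - xs⟫ := by
    simp only [inner_add_left, sum_inner, real_inner_smul_left]
  rw [hzero, inner_zero_left] at hsum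
  linarith

theorem stmt15_general {p q m : ℕ}
    (β ρy ρz ηk Lg θ μ : ℝ) (L B : Fin m → ℝ)
    (hβ : 0 < β) (hθ : 0 < θ ∧ θ < 1)
    (hρy : 0 < ρy ∧ ρy ≤ β) (hρz : 0 < ρz ∧ ρz ≤ β * (1 - θ))
    (g h : EuclideanSpace ℝ (Fin p) → ℝ)
    (f : Fin m → EuclideanSpace ℝ (Fin p) → ℝ)
    (g' : EuclideanSpace ℝ (Fin p) → EuclideanSpace ℝ (Fin p))
    (f' : Fin m → EuclideanSpace ℝ (Fin p) → EuclideanSpace ℝ (Fin p))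
    (A : EuclideanSpace ℝ (Fin p) →L[ℝ] EuclideanSpace ℝ (Fin q))
    (b : EuclideanSpace ℝ (Fin q))
    (hgconv : ConvexOn ℝ Set.univ g) (hhconv : ConvexOn ℝ Set.univ h)
    (hfconv : ∀ j, ConvexOn ℝ Set.univ (f j))
    (hg : ∀ x, HasGradientAt g (g' x) x)
    (hf : ∀ j x, HasGradientAt (f j) (f' j x) x)
    -- Assumption (Lip)
    (hLg : ∀ xh xt, ‖g' xh - g' xt‖ ≤ Lg * ‖xh - xt‖)
    (hLf : ∀ j xh xt, ‖f' j xh - f' j xt‖ ≤ L j * ‖xh - xt‖)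
    (hBf : ∀ j x, ‖f' j x‖ ≤ B j)
    -- the KKT point `(x*, y*, z*)` and the active set `J`
    (xs : EuclideanSpace ℝ (Fin p)) (ys : EuclideanSpace ℝ (Fin q))
    (zs : EuclideanSpace ℝ (Fin m))
    (hkkt1 : ∃ s : EuclideanSpace ℝ (Fin p), (∀ u, h xs + ⟪s, u - xs⟫ ≤ h u) ∧
      g' xs + s + (ContinuousLinearMap.adjoint A) ys + ∑ j, zs j • f' j xs = 0)
    (hkkt2 : A xs = b)
    (hkkt3 : ∀ j, 0 ≤ zs j ∧ f j xs ≤ 0 ∧ zs j * f j xs = 0)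
    (J : Finset (Fin m))
    (hJin : ∀ j ∈ J, f j xs = 0 ∧ 0 < zs j)
    (hJout : ∀ j ∉ J, f j xs < 0 ∧ zs j = 0)
    -- one LALM iteration from `(x^k, y^k, z^k)` with `z^k ≥ 0`
    (xk xk1 : EuclideanSpace ℝ (Fin p)) (yk yk1 : EuclideanSpace ℝ (Fin q))
    (zk zk1 : EuclideanSpace ℝ (Fin m))
    (hzk : ∀ j, 0 ≤ zk j)
    (hxmin : ∀ x : EuclideanSpace ℝ (Fin p),
      h xk1 + ⟪gradFx β f g' f' A b xk yk zk, xk1⟫ + ηk / 2 * ‖xk1 - xk‖ ^ 2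
        ≤ h x + ⟪gradFx β f g' f' A b xk yk zk, x⟫ + ηk / 2 * ‖x - xk‖ ^ 2)
    (hy : yk1 = yk + ρy • (A xk1 - b))
    (hz : ∀ j, zk1 j = zk j + ρz * max (-(zk j) / β) (f j xk1))
    -- the local sign conditions
    (hsgnin : ∀ j ∈ J, 0 < β * f j xk1 + zk j ∧ 0 < β * f j xk1 + zs j)
    (hsgnout : ∀ j ∉ J, β * f j xk1 + zk j < 0 ∧ β * f j xk1 < 0)
    -- the local strong-convexity inequality
    (hscv : μ / 4 * ‖xk1 - xs‖ ^ 2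
      ≤ (g xk1 + h xk1) - (g xs + h xs) + ⟪ys, A xk1 - b⟫ + β / 2 * ‖A xk1 - b‖ ^ 2
        + PsiAug β f xk1 zs - PsiAug β f xs zs) :
    θ * μ / 4 * ‖xk1 - xs‖ ^ 2 + ηk / 2 * ‖xk1 - xs‖ ^ 2 - β / 2 * ‖A xk1 - b‖ ^ 2
      + 1 / (2 * ρy) * ‖yk1 - ys‖ ^ 2 + 1 / (2 * ρz) * ‖zk1 - zs‖ ^ 2
      + 1 / 2 * ((ηk - Lg - ∑ j, (β * (B j) ^ 2 + L j * max (β * f j xk + zk j) 0))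
            * ‖xk1 - xk‖ ^ 2 - β * ‖A (xk1 - xk)‖ ^ 2)
      + (β * (1 - θ / 2) - ρy / 2) * ‖A xk1 - b‖ ^ 2
    ≤ ηk / 2 * ‖xk - xs‖ ^ 2 - β / 2 * ‖A xk - b‖ ^ 2
      + 1 / (2 * ρy) * ‖yk - ys‖ ^ 2 + 1 / (2 * ρz) * ‖zk - zs‖ ^ 2 := by
  obtain ⟨hθ₀, hθ₁⟩ := hθ
  obtain ⟨hρz₀, hρzβ⟩ := hρz
  have hx := lalm_x_step hβ hgconv hhconv hfconv hg hf hLg hLf hBf hxmin hkkt2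
  have hydual := inner_sub_eq_of_eq_add_smul (y := ys) hρy.1.ne' hy
  have hzdual := lalm_z_step hβ hρz₀ (hρzβ.trans (mul_le_of_le_one_right hβ.le (by linarith)))
    hzk hz hJin hJout hsgnin fun j hj => (hsgnout j hj).1
  have hgap := kkt_lagrangian_gap_nonneg hgconv hfconv hg hf hkkt1 hkkt2 (fun j => (hkkt3 j).1)
    (fun j => (hkkt3 j).2.2) xk1
  have hΨ := psiAug_sub_psiAug_of_kkt hβ hJin hJout (fun j hj => (hsgnin j hj).2)
    fun j hj => (hsgnout j hj).2
  have hyk : ⟪yk, A xk1 - b⟫ = ⟪ys, A xk1 - b⟫ + ⟪yk - ys, A xk1 - b⟫ := by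
    rw [inner_sub_left]; ring
  have hS : 0 ≤ ∑ j ∈ J, f j xk1 ^ 2 := by positivity
  have hθscv := mul_le_mul_of_nonneg_left hscv hθ₀.le
  have hQ : β / 2 * ‖A xk1 - b‖ ^ 2 + β / 2 * ∑ j ∈ J, f j xk1 ^ 2
      ≤ (g xk1 + h xk1) - (g xs + h xs) + ⟪ys, A xk1 - b⟫ + β / 2 * ‖A xk1 - b‖ ^ 2
        + PsiAug β f xk1 zs - PsiAug β f xs zs := by
    linarith
  have hθQ := mul_le_mul_of_nonneg_left hQ (sub_nonneg.2 hθ₁.le)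
  have hslack := mul_le_mul_of_nonneg_right hρzβ hS
  linarith

/-- Theorem: one-iteration inequality used for local linear convergence. -/
theorem stmt15 {p q m : ℕ}
    (β ρy ρz ηk Lg θ μ : ℝ) (L B : Fin m → ℝ)
    (hβ : 0 < β) (hθ : 0 < θ ∧ θ < 1)
    (hρy : 0 < ρy ∧ ρy ≤ β) (hρz : 0 < ρz ∧ ρz ≤ β * (1 - θ)) (hμ : 0 < μ)
    (g h : EuclideanSpace ℝ (Fin p) → ℝ)
    (f : Fin m → EuclideanSpace ℝ (Fin p) → ℝ)
    (g' : EuclideanSpace ℝ (Fin p) → EuclideanSpace ℝ (Fin p))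
    (f' : Fin m → EuclideanSpace ℝ (Fin p) → EuclideanSpace ℝ (Fin p))
    (A : EuclideanSpace ℝ (Fin p) →L[ℝ] EuclideanSpace ℝ (Fin q))
    (b : EuclideanSpace ℝ (Fin q))
    (hgconv : ConvexOn ℝ Set.univ g) (hhconv : ConvexOn ℝ Set.univ h)
    (hfconv : ∀ j, ConvexOn ℝ Set.univ (f j))
    (hg : ∀ x, HasGradientAt g (g' x) x)
    (hf : ∀ j x, HasGradientAt (f j) (f' j x) x)
    -- Assumption (Lip)
    (hLg : ∀ xh xt, ‖g' xh - g' xt‖ ≤ Lg * ‖xh - xt‖)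
    (hLf : ∀ j xh xt, ‖f' j xh - f' j xt‖ ≤ L j * ‖xh - xt‖)
    (hBf : ∀ j x, ‖f' j x‖ ≤ B j)
    -- the KKT point `(x*, y*, z*)` and the active set `J`
    (xs : EuclideanSpace ℝ (Fin p)) (ys : EuclideanSpace ℝ (Fin q))
    (zs : EuclideanSpace ℝ (Fin m))
    (hkkt1 : ∃ s : EuclideanSpace ℝ (Fin p), (∀ u, h xs + ⟪s, u - xs⟫ ≤ h u) ∧
      g' xs + s + (ContinuousLinearMap.adjoint A) ys + ∑ j, zs j • f' j xs = 0)
    (hkkt2 : A xs = b)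
    (hkkt3 : ∀ j, 0 ≤ zs j ∧ f j xs ≤ 0 ∧ zs j * f j xs = 0)
    (J : Finset (Fin m))
    (hJin : ∀ j ∈ J, f j xs = 0 ∧ 0 < zs j)
    (hJout : ∀ j ∉ J, f j xs < 0 ∧ zs j = 0)
    -- one LALM iteration from `(x^k, y^k, z^k)` with `z^k ≥ 0`
    (xk xk1 : EuclideanSpace ℝ (Fin p)) (yk yk1 : EuclideanSpace ℝ (Fin q))
    (zk zk1 : EuclideanSpace ℝ (Fin m))
    (hzk : ∀ j, 0 ≤ zk j)
    (hxmin : ∀ x : EuclideanSpace ℝ (Fin p),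
      h xk1 + ⟪gradFx β f g' f' A b xk yk zk, xk1⟫ + ηk / 2 * ‖xk1 - xk‖ ^ 2
        ≤ h x + ⟪gradFx β f g' f' A b xk yk zk, x⟫ + ηk / 2 * ‖x - xk‖ ^ 2)
    (hy : yk1 = yk + ρy • (A xk1 - b))
    (hz : ∀ j, zk1 j = zk j + ρz * max (-(zk j) / β) (f j xk1))
    -- the local sign conditions
    (hsgnin : ∀ j ∈ J, 0 < β * f j xk1 + zk j ∧ 0 < β * f j xk1 + zs j)
    (hsgnout : ∀ j ∉ J, β * f j xk1 + zk j < 0 ∧ β * f j xk1 < 0)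
    -- the local strong-convexity inequality
    (hscv : μ / 4 * ‖xk1 - xs‖ ^ 2
      ≤ (g xk1 + h xk1) - (g xs + h xs) + ⟪ys, A xk1 - b⟫ + β / 2 * ‖A xk1 - b‖ ^ 2
        + PsiAug β f xk1 zs - PsiAug β f xs zs) :
    θ * μ / 4 * ‖xk1 - xs‖ ^ 2 + ηk / 2 * ‖xk1 - xs‖ ^ 2 - β / 2 * ‖A xk1 - b‖ ^ 2
      + 1 / (2 * ρy) * ‖yk1 - ys‖ ^ 2 + 1 / (2 * ρz) * ‖zk1 - zs‖ ^ 2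
      + 1 / 2 * ((ηk - Lg - ∑ j, (β * (B j) ^ 2 + L j * max (β * f j xk + zk j) 0))
            * ‖xk1 - xk‖ ^ 2 - β * ‖A (xk1 - xk)‖ ^ 2)
      + (β * (1 - θ / 2) - ρy / 2) * ‖A xk1 - b‖ ^ 2
    ≤ ηk / 2 * ‖xk - xs‖ ^ 2 - β / 2 * ‖A xk - b‖ ^ 2
      + 1 / (2 * ρy) * ‖yk - ys‖ ^ 2 + 1 / (2 * ρz) * ‖zk - zs‖ ^ 2 :=
  stmt15_general β ρy ρz ηk Lg θ μ L B hβ hθ hρy hρz g h f g' f' A b hgconv hhconv hfconv hg hf hLg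
    hLf hBf xs ys zs hkkt1 hkkt2 hkkt3 J hJin hJout xk xk1 yk yk1 zk zk1 hzk hxmin hy hz hsgnin
    hsgnout hscv

end
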